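/- arXiv:0905.2759 — 3 statements merged into one kernel-verified Lean document; each statement's English description precedes it below -/
import Mathlib

section
/- (Lemma 1, general form) For any A and B₁,...,B_J in an associative ring, the total antisymmetrization over the B's of the (J+1)-bracket [A B₁ ⋯ B_J] equals J! times the total antisymmetrization over the B's of Σ_{j=0}^{J} (−1)^j B₁⋯B_j A B_{j+1}⋯B_J. -/
/-!
Sort the terms of the bracket `[A B₁ ⋯ B_J]` by the position `j` of `A` and the order `π` in
which the `B`'s appear: the permutation is `π` composed with a `j`-cycle, so its sign is
`(-1)^j sign π`, and the bracket becomes `Σ_π sign π Σ_j (-1)^j B_{π1}⋯B_{πj} A ⋯`. Under the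
outer antisymmetrization `Σ_τ sign τ`, substituting `ρ = τπ` makes each of the `J!` inner
permutations `π` contribute the same antisymmetrized sum.
-/

/-- The Nambu `n`-bracket: signed sum over all permutations of the ordered product. -/
def nambu {R : Type*} [Ring R] {n : ℕ} (f : Fin n → R) : R :=
  ∑ σ : Equiv.Perm (Fin n), (Equiv.Perm.sign σ : ℤ) • (List.ofFn (f ∘ σ)).prod

open Equiv Finset

theorem List.ofFn_insertNth {α : Type*} {n : ℕ} (p : Fin (n + 1)) (a : α) (x : Fin n → α) :
    ofFn (p.insertNth a x) = (ofFn x).take p ++ a :: (ofFn x).drop p := by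
  induction n with
  | zero => simp [Fin.fin_one_eq_zero p]
  | succ n ih =>
    cases p using Fin.cases with
    | zero => simp
    | succ p =>
      rw [← Fin.cons_self_tail x, Fin.insertNth_succ_cons, ofFn_cons, ofFn_cons, ih]
      simp

theorem Fin.cons_comp_decomposeFin_symm_zero {α : Type*} {n : ℕ} (a : α) (x : Fin n → α)
    (π : Perm (Fin n)) :
    Fin.cons a x ∘ Perm.decomposeFin.symm (0, π) = Fin.cons a (x ∘ π) := by
  ext i
  cases i using Fin.cases <;> simp [Perm.decomposeFin_symm_apply_succ]

/-- `(p, π)` is the permutation `σ` with `σ p = 0` and the other positions filled, in order,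
by `1 + π 0, 1 + π 1, …`: in the word `f ∘ σ`, the letter `f 0` sits at position `p`. -/
noncomputable def Equiv.Perm.finSuccEquivCycleRange (n : ℕ) :
    Fin (n + 1) × Perm (Fin n) ≃ Perm (Fin (n + 1)) :=
  Equiv.ofBijective (fun q => Perm.decomposeFin.symm (0, q.2) * q.1.cycleRange) <| by
    rw [Fintype.bijective_iff_injective_and_card]
    refine ⟨fun ⟨p, π⟩ ⟨p', π'⟩ h => ?_, by simp [Fintype.card_perm, Nat.factorial_succ]⟩
    simp only at h
    have sends_to_zero : ∀ (p : Fin (n + 1)) (π : Perm (Fin n)),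
        (Perm.decomposeFin.symm (0, π) * p.cycleRange) p = 0 := by
      simp [Perm.decomposeFin_symm_apply_zero]
    have hp : p = p' := (Perm.decomposeFin.symm (0, π') * p'.cycleRange).injective <| by
      rw [sends_to_zero p' π', ← h, sends_to_zero]
    subst hp
    simpa using mul_right_cancel h

theorem nambu_cons {R : Type*} [Ring R] {n : ℕ} (a : R) (g : Fin n → R) :
    nambu (Fin.cons a g) = ∑ π : Perm (Fin n), (Perm.sign π : ℤ) •
      ∑ j ∈ range (n + 1), (-1 : ℤ) ^ j •
        (((List.ofFn (g ∘ π)).take j).prod * a * ((List.ofFn (g ∘ π)).drop j).prod) := by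
  rw [nambu, ← (Perm.finSuccEquivCycleRange n).sum_comp, Fintype.sum_prod_type, sum_comm]
  refine sum_congr rfl fun π _ => ?_
  rw [smul_sum, ← Fin.sum_univ_eq_sum_range]
  refine sum_congr rfl fun p _ => ?_
  have hsign : (Perm.sign (Perm.finSuccEquivCycleRange n (p, π)) : ℤ) =
      (Perm.sign π : ℤ) * (-1) ^ (p : ℕ) := by
    simp [Perm.finSuccEquivCycleRange, Perm.decomposeFin.symm_sign, Fin.sign_cycleRange]
  have hword : Fin.cons a g ∘ Perm.finSuccEquivCycleRange n (p, π) =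
      p.insertNth a (g ∘ π) := by
    simp only [Perm.finSuccEquivCycleRange, Equiv.ofBijective_apply, Perm.coe_mul,
      ← Function.comp_assoc, Fin.cons_comp_decomposeFin_symm_zero, Fin.cons_comp_cycleRange]
  rw [hsign, hword, List.ofFn_insertNth, List.prod_append, List.prod_cons, smul_smul, mul_assoc]

theorem Equiv.Perm.sum_sign_smul_sum_sign_smul_mul {α M : Type*} [Fintype α] [DecidableEq α]
    [AddCommGroup M] (F : Perm α → M) :
    ∑ τ : Perm α, (Perm.sign τ : ℤ) • ∑ π : Perm α, (Perm.sign π : ℤ) • F (τ * π) =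
      ((Fintype.card α).factorial : ℤ) • ∑ ρ : Perm α, (Perm.sign ρ : ℤ) • F ρ := by
  have inner (τ : Perm α) : ∑ π : Perm α, (Perm.sign π : ℤ) • F (τ * π) =
      (Perm.sign τ : ℤ) • ∑ ρ : Perm α, (Perm.sign ρ : ℤ) • F ρ := by
    rw [← Equiv.sum_comp (Equiv.mulLeft τ⁻¹), smul_sum]
    refine sum_congr rfl fun ρ _ => ?_
    simp only [coe_mulLeft, mul_inv_cancel_left, Perm.sign_mul, Perm.sign_inv, Units.val_mul,
      mul_smul]
  simp_rw [inner, smul_smul, ← Units.val_mul, Int.units_mul_self, Units.val_one, one_smul,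
    sum_const, card_univ, Fintype.card_perm, natCast_zsmul]

/-- Lemma 1: antisymmetrized `[A B₁ ⋯ B_J]` equals `J!` times the antisymmetrization of
`Σ_{j=0}^{J} (−1)^j B₁⋯B_j A B_{j+1}⋯B_J`. -/
theorem lemma_one {R : Type*} [Ring R] {J : ℕ} (A : R) (B : Fin J → R) :
    ∑ τ : Equiv.Perm (Fin J), (Equiv.Perm.sign τ : ℤ) • nambu (Fin.cons A (B ∘ τ)) =
      (J.factorial : ℤ) • ∑ τ : Equiv.Perm (Fin J), (Equiv.Perm.sign τ : ℤ) •
        ∑ j ∈ Finset.range (J + 1), ((-1 : ℤ) ^ j) •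
          (((List.ofFn (B ∘ τ)).take j).prod * A * ((List.ofFn (B ∘ τ)).drop j).prod) := by
  simp_rw [nambu_cons, Function.comp_assoc, ← Perm.coe_mul]
  simpa only [Fintype.card_fin] using
    Perm.sum_sign_smul_sum_sign_smul_mul fun ρ : Perm (Fin J) =>
      ∑ j ∈ range (J + 1), (-1 : ℤ) ^ j •
        (((List.ofFn (B ∘ ρ)).take j).prod * A * ((List.ofFn (B ∘ ρ)).drop j).prod)
end

section
/- (Odd case non-identity / higher-bracket reduction, N = 3) There exists a fixed positive integer c such that for all B₁,...,B₅ the total antisymmetrization of [B₁ B₂ [B₃ B₄ B₅]] satisfies Σ_{τ∈S₅} sgn(τ) [B_{τ(1)} B_{τ(2)} [B_{τ(3)} B_{τ(4)} B_{τ(5)}]] = c·[B₁ B₂ B₃ B₄ B₅]. -/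
private def e0 : Equiv.Perm (Fin 3) := ⟨![0,1,2],![0,1,2],by decide,by decide⟩
private def e1 : Equiv.Perm (Fin 3) := ⟨![0,2,1],![0,2,1],by decide,by decide⟩
private def e2 : Equiv.Perm (Fin 3) := ⟨![1,0,2],![1,0,2],by decide,by decide⟩
private def e3 : Equiv.Perm (Fin 3) := ⟨![1,2,0],![2,0,1],by decide,by decide⟩
private def e4 : Equiv.Perm (Fin 3) := ⟨![2,0,1],![1,2,0],by decide,by decide⟩
private def e5 : Equiv.Perm (Fin 3) := ⟨![2,1,0],![2,1,0],by decide,by decide⟩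

lemma nambu3 {R : Type*} [Ring R] (x y z : R) :
    nambu ![x, y, z] =
      x*(y*z) - x*(z*y) - y*(x*z) + y*(z*x) + z*(x*y) - z*(y*x) := by
  rw [nambu, show (Finset.univ : Finset (Equiv.Perm (Fin 3))) = {e0,e1,e2,e3,e4,e5} from by decide]
  rw [Finset.sum_insert (by decide), Finset.sum_insert (by decide), Finset.sum_insert (by decide),
    Finset.sum_insert (by decide), Finset.sum_insert (by decide), Finset.sum_singleton]
  rw [show (Equiv.Perm.sign e0 : ℤ) = 1 from by decide,
      show (Equiv.Perm.sign e1 : ℤ) = -1 from by decide,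
      show (Equiv.Perm.sign e2 : ℤ) = -1 from by decide,
      show (Equiv.Perm.sign e3 : ℤ) = 1 from by decide,
      show (Equiv.Perm.sign e4 : ℤ) = 1 from by decide,
      show (Equiv.Perm.sign e5 : ℤ) = -1 from by decide]
  simp [e0,e1,e2,e3,e4,e5, Equiv.coe_fn_mk, List.ofFn_succ, Function.comp]
  noncomm_ring


lemma nambu5 {R : Type*} [Ring R] (B : Fin 5 → R) :
    nambu B = ∑ σ : Equiv.Perm (Fin 5), (Equiv.Perm.sign σ : ℤ) •
      (B (σ 0) * (B (σ 1) * (B (σ 2) * (B (σ 3) * B (σ 4))))) := by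
  rw [nambu]
  refine Finset.sum_congr rfl fun σ _ => ?_
  congr 1
  simp [List.ofFn_succ, Function.comp, mul_assoc,
    show Fin.succ (2 : Fin 4) = (3 : Fin 5) from rfl,
    show Fin.succ (3 : Fin 4) = (4 : Fin 5) from rfl,
    show Fin.succ (Fin.succ (2 : Fin 3)) = (4 : Fin 5) from rfl]

lemma key {R : Type*} [Ring R] (B : Fin 5 → R) (p : Equiv.Perm (Fin 5)) (s : ℤ)
    (hs : (Equiv.Perm.sign p : ℤ) = s) (a b c d e : Fin 5)
    (ha : p 0 = a) (hb : p 1 = b) (hc : p 2 = c) (hd : p 3 = d) (he : p 4 = e) :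
    ∑ τ : Equiv.Perm (Fin 5), (Equiv.Perm.sign τ : ℤ) •
      (B (τ a) * (B (τ b) * (B (τ c) * (B (τ d) * B (τ e))))) = s • nambu B := by
  subst ha hb hc hd he hs
  rw [nambu5, Finset.smul_sum]
  refine Fintype.sum_equiv (Equiv.mulRight p) _ _ fun τ => ?_
  have hsgn : (Equiv.Perm.sign p : ℤ) * ((Equiv.Perm.sign (τ * p) : ℤˣ) : ℤ)
      = (Equiv.Perm.sign τ : ℤ) := by
    rw [← Units.val_mul, Equiv.Perm.sign_mul]
    congr 1
    rw [mul_comm (Equiv.Perm.sign τ), ← mul_assoc, Int.units_mul_self, one_mul]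
  simp only [Equiv.coe_mulRight, smul_smul, hsgn, Equiv.Perm.mul_apply]

lemma expand {R : Type*} [Ring R] (x y a b c : R) :
    x*(y*(a*(b*c) - a*(c*b) - b*(a*c) + b*(c*a) + c*(a*b) - c*(b*a))) - x*((a*(b*c) - a*(c*b) - b*(a*c) + b*(c*a) + c*(a*b) - c*(b*a))*y) - y*(x*(a*(b*c) - a*(c*b) - b*(a*c) + b*(c*a) + c*(a*b) - c*(b*a))) + y*((a*(b*c) - a*(c*b) - b*(a*c) + b*(c*a) + c*(a*b) - c*(b*a))*x) + (a*(b*c) - a*(c*b) - b*(a*c) + b*(c*a) + c*(a*b) - c*(b*a))*(x*y) - (a*(b*c) - a*(c*b) - b*(a*c) + b*(c*a) + c*(a*b) - c*(b*a))*(y*x) =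
    (x * (y * (a * (b * (c))))) - (x * (y * (a * (c * (b))))) - (x * (y * (b * (a * (c))))) + (x * (y * (b * (c * (a))))) + (x * (y * (c * (a * (b))))) - (x * (y * (c * (b * (a))))) - (x * (a * (b * (c * (y))))) + (x * (a * (c * (b * (y))))) + (x * (b * (a * (c * (y))))) - (x * (b * (c * (a * (y))))) - (x * (c * (a * (b * (y))))) + (x * (c * (b * (a * (y))))) - (y * (x * (a * (b * (c))))) + (y * (x * (a * (c * (b))))) + (y * (x * (b * (a * (c))))) - (y * (x * (b * (c * (a))))) - (y * (x * (c * (a * (b))))) + (y * (x * (c * (b * (a))))) + (y * (a * (b * (c * (x))))) - (y * (a * (c * (b * (x))))) - (y * (b * (a * (c * (x))))) + (y * (b * (c * (a * (x))))) + (y * (c * (a * (b * (x))))) - (y * (c * (b * (a * (x))))) + (a * (b * (c * (x * (y))))) - (a * (c * (b * (x * (y))))) - (b * (a * (c * (x * (y))))) + (b * (c * (a * (x * (y))))) + (c * (a * (b * (x * (y))))) - (c * (b * (a * (x * (y))))) - (a * (b * (c * (y * (x))))) + (a * (c * (b * (y * (x))))) + (b * (a * (c * (y * (x))))) - (b * (c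 * (a * (y * (x))))) - (c * (a * (b * (y * (x))))) + (c * (b * (a * (y * (x))))) := by
  noncomm_ring

/-- For `N = 3`, antisymmetrizing `[B₁ B₂ [B₃ B₄ B₅]]` gives a fixed positive integer
multiple of the 5-bracket, universally in the ring and its elements. -/
theorem odd_three_bracket_reduction :
    ∃ c : ℕ, 0 < c ∧ ∀ (R : Type) [Ring R] (B : Fin 5 → R),
      ∑ τ : Equiv.Perm (Fin 5), (Equiv.Perm.sign τ : ℤ) •
          nambu ![B (τ 0), B (τ 1), nambu ![B (τ 2), B (τ 3), B (τ 4)]] =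
        (c : ℤ) • nambu B := by
  refine ⟨36, by norm_num, fun R _ B => ?_⟩
  simp only [nambu3, expand]
  simp only [smul_sub, smul_add, Finset.sum_sub_distrib, Finset.sum_add_distrib]
  rw [key B ⟨![0,1,2,3,4],![0,1,2,3,4],by decide,by decide⟩ (1) (by decide) (0 : Fin 5) (1 : Fin 5) (2 : Fin 5) (3 : Fin 5) (4 : Fin 5) (by decide) (by decide) (by decide) (by decide) (by decide)]
  rw [key B ⟨![0,1,2,4,3],![0,1,2,4,3],by decide,by decide⟩ (-1) (by decide) (0 : Fin 5) (1 : Fin 5) (2 : Fin 5) (4 : Fin 5) (3 : Fin 5) (by decide) (by decide) (by decide) (by decide) (by decide)]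
  rw [key B ⟨![0,1,3,2,4],![0,1,3,2,4],by decide,by decide⟩ (-1) (by decide) (0 : Fin 5) (1 : Fin 5) (3 : Fin 5) (2 : Fin 5) (4 : Fin 5) (by decide) (by decide) (by decide) (by decide) (by decide)]
  rw [key B ⟨![0,1,3,4,2],![0,1,4,2,3],by decide,by decide⟩ (1) (by decide) (0 : Fin 5) (1 : Fin 5) (3 : Fin 5) (4 : Fin 5) (2 : Fin 5) (by decide) (by decide) (by decide) (by decide) (by decide)]
  rw [key B ⟨![0,1,4,2,3],![0,1,3,4,2],by decide,by decide⟩ (1) (by decide) (0 : Fin 5) (1 : Fin 5) (4 : Fin 5) (2 : Fin 5) (3 : Fin 5) (by decide) (by decide) (by decide) (by decide) (by decide)]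
  rw [key B ⟨![0,1,4,3,2],![0,1,4,3,2],by decide,by decide⟩ (-1) (by decide) (0 : Fin 5) (1 : Fin 5) (4 : Fin 5) (3 : Fin 5) (2 : Fin 5) (by decide) (by decide) (by decide) (by decide) (by decide)]
  rw [key B ⟨![0,2,3,4,1],![0,4,1,2,3],by decide,by decide⟩ (-1) (by decide) (0 : Fin 5) (2 : Fin 5) (3 : Fin 5) (4 : Fin 5) (1 : Fin 5) (by decide) (by decide) (by decide) (by decide) (by decide)]
  rw [key B ⟨![0,2,4,3,1],![0,4,1,3,2],by decide,by decide⟩ (1) (by decide) (0 : Fin 5) (2 : Fin 5) (4 : Fin 5) (3 : Fin 5) (1 : Fin 5) (by decide) (by decide) (by decide) (by decide) (by decide)]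
  rw [key B ⟨![0,3,2,4,1],![0,4,2,1,3],by decide,by decide⟩ (1) (by decide) (0 : Fin 5) (3 : Fin 5) (2 : Fin 5) (4 : Fin 5) (1 : Fin 5) (by decide) (by decide) (by decide) (by decide) (by decide)]
  rw [key B ⟨![0,3,4,2,1],![0,4,3,1,2],by decide,by decide⟩ (-1) (by decide) (0 : Fin 5) (3 : Fin 5) (4 : Fin 5) (2 : Fin 5) (1 : Fin 5) (by decide) (by decide) (by decide) (by decide) (by decide)]
  rw [key B ⟨![0,4,2,3,1],![0,4,2,3,1],by decide,by decide⟩ (-1) (by decide) (0 : Fin 5) (4 : Fin 5) (2 : Fin 5) (3 : Fin 5) (1 : Fin 5) (by decide) (by decide) (by decide) (by decide) (by decide)]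
  rw [key B ⟨![0,4,3,2,1],![0,4,3,2,1],by decide,by decide⟩ (1) (by decide) (0 : Fin 5) (4 : Fin 5) (3 : Fin 5) (2 : Fin 5) (1 : Fin 5) (by decide) (by decide) (by decide) (by decide) (by decide)]
  rw [key B ⟨![1,0,2,3,4],![1,0,2,3,4],by decide,by decide⟩ (-1) (by decide) (1 : Fin 5) (0 : Fin 5) (2 : Fin 5) (3 : Fin 5) (4 : Fin 5) (by decide) (by decide) (by decide) (by decide) (by decide)]
  rw [key B ⟨![1,0,2,4,3],![1,0,2,4,3],by decide,by decide⟩ (1) (by decide) (1 : Fin 5) (0 : Fin 5) (2 : Fin 5) (4 : Fin 5) (3 : Fin 5) (by decide) (by decide) (by decide) (by decide) (by decide)]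
  rw [key B ⟨![1,0,3,2,4],![1,0,3,2,4],by decide,by decide⟩ (1) (by decide) (1 : Fin 5) (0 : Fin 5) (3 : Fin 5) (2 : Fin 5) (4 : Fin 5) (by decide) (by decide) (by decide) (by decide) (by decide)]
  rw [key B ⟨![1,0,3,4,2],![1,0,4,2,3],by decide,by decide⟩ (-1) (by decide) (1 : Fin 5) (0 : Fin 5) (3 : Fin 5) (4 : Fin 5) (2 : Fin 5) (by decide) (by decide) (by decide) (by decide) (by decide)]
  rw [key B ⟨![1,0,4,2,3],![1,0,3,4,2],by decide,by decide⟩ (-1) (by decide) (1 : Fin 5) (0 : Fin 5) (4 : Fin 5) (2 : Fin 5) (3 : Fin 5) (by decide) (by decide) (by decide) (by decide) (by decide)]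
  rw [key B ⟨![1,0,4,3,2],![1,0,4,3,2],by decide,by decide⟩ (1) (by decide) (1 : Fin 5) (0 : Fin 5) (4 : Fin 5) (3 : Fin 5) (2 : Fin 5) (by decide) (by decide) (by decide) (by decide) (by decide)]
  rw [key B ⟨![1,2,3,4,0],![4,0,1,2,3],by decide,by decide⟩ (1) (by decide) (1 : Fin 5) (2 : Fin 5) (3 : Fin 5) (4 : Fin 5) (0 : Fin 5) (by decide) (by decide) (by decide) (by decide) (by decide)]
  rw [key B ⟨![1,2,4,3,0],![4,0,1,3,2],by decide,by decide⟩ (-1) (by decide) (1 : Fin 5) (2 : Fin 5) (4 : Fin 5) (3 : Fin 5) (0 : Fin 5) (by decide) (by decide) (by decide) (by decide) (by decide)]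
  rw [key B ⟨![1,3,2,4,0],![4,0,2,1,3],by decide,by decide⟩ (-1) (by decide) (1 : Fin 5) (3 : Fin 5) (2 : Fin 5) (4 : Fin 5) (0 : Fin 5) (by decide) (by decide) (by decide) (by decide) (by decide)]
  rw [key B ⟨![1,3,4,2,0],![4,0,3,1,2],by decide,by decide⟩ (1) (by decide) (1 : Fin 5) (3 : Fin 5) (4 : Fin 5) (2 : Fin 5) (0 : Fin 5) (by decide) (by decide) (by decide) (by decide) (by decide)]
  rw [key B ⟨![1,4,2,3,0],![4,0,2,3,1],by decide,by decide⟩ (1) (by decide) (1 : Fin 5) (4 : Fin 5) (2 : Fin 5) (3 : Fin 5) (0 : Fin 5) (by decide) (by decide) (by decide) (by decide) (by decide)]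
  rw [key B ⟨![1,4,3,2,0],![4,0,3,2,1],by decide,by decide⟩ (-1) (by decide) (1 : Fin 5) (4 : Fin 5) (3 : Fin 5) (2 : Fin 5) (0 : Fin 5) (by decide) (by decide) (by decide) (by decide) (by decide)]
  rw [key B ⟨![2,3,4,0,1],![3,4,0,1,2],by decide,by decide⟩ (1) (by decide) (2 : Fin 5) (3 : Fin 5) (4 : Fin 5) (0 : Fin 5) (1 : Fin 5) (by decide) (by decide) (by decide) (by decide) (by decide)]
  rw [key B ⟨![2,4,3,0,1],![3,4,0,2,1],by decide,by decide⟩ (-1) (by decide) (2 : Fin 5) (4 : Fin 5) (3 : Fin 5) (0 : Fin 5) (1 : Fin 5) (by decide) (by decide) (by decide) (by decide) (by decide)]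
  rw [key B ⟨![3,2,4,0,1],![3,4,1,0,2],by decide,by decide⟩ (-1) (by decide) (3 : Fin 5) (2 : Fin 5) (4 : Fin 5) (0 : Fin 5) (1 : Fin 5) (by decide) (by decide) (by decide) (by decide) (by decide)]
  rw [key B ⟨![3,4,2,0,1],![3,4,2,0,1],by decide,by decide⟩ (1) (by decide) (3 : Fin 5) (4 : Fin 5) (2 : Fin 5) (0 : Fin 5) (1 : Fin 5) (by decide) (by decide) (by decide) (by decide) (by decide)]
  rw [key B ⟨![4,2,3,0,1],![3,4,1,2,0],by decide,by decide⟩ (1) (by decide) (4 : Fin 5) (2 : Fin 5) (3 : Fin 5) (0 : Fin 5) (1 : Fin 5) (by decide) (by decide) (by decide) (by decide) (by decide)]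
  rw [key B ⟨![4,3,2,0,1],![3,4,2,1,0],by decide,by decide⟩ (-1) (by decide) (4 : Fin 5) (3 : Fin 5) (2 : Fin 5) (0 : Fin 5) (1 : Fin 5) (by decide) (by decide) (by decide) (by decide) (by decide)]
  rw [key B ⟨![2,3,4,1,0],![4,3,0,1,2],by decide,by decide⟩ (-1) (by decide) (2 : Fin 5) (3 : Fin 5) (4 : Fin 5) (1 : Fin 5) (0 : Fin 5) (by decide) (by decide) (by decide) (by decide) (by decide)]
  rw [key B ⟨![2,4,3,1,0],![4,3,0,2,1],by decide,by decide⟩ (1) (by decide) (2 : Fin 5) (4 : Fin 5) (3 : Fin 5) (1 : Fin 5) (0 : Fin 5) (by decide) (by decide) (by decide) (by decide) (by decide)]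
  rw [key B ⟨![3,2,4,1,0],![4,3,1,0,2],by decide,by decide⟩ (1) (by decide) (3 : Fin 5) (2 : Fin 5) (4 : Fin 5) (1 : Fin 5) (0 : Fin 5) (by decide) (by decide) (by decide) (by decide) (by decide)]
  rw [key B ⟨![3,4,2,1,0],![4,3,2,0,1],by decide,by decide⟩ (-1) (by decide) (3 : Fin 5) (4 : Fin 5) (2 : Fin 5) (1 : Fin 5) (0 : Fin 5) (by decide) (by decide) (by decide) (by decide) (by decide)]
  rw [key B ⟨![4,2,3,1,0],![4,3,1,2,0],by decide,by decide⟩ (-1) (by decide) (4 : Fin 5) (2 : Fin 5) (3 : Fin 5) (1 : Fin 5) (0 : Fin 5) (by decide) (by decide) (by decide) (by decide) (by decide)]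
  rw [key B ⟨![4,3,2,1,0],![4,3,2,1,0],by decide,by decide⟩ (1) (by decide) (4 : Fin 5) (3 : Fin 5) (2 : Fin 5) (1 : Fin 5) (0 : Fin 5) (by decide) (by decide) (by decide) (by decide) (by decide)]
  generalize nambu B = n
  push_cast
  module
end

section
/- (Main theorem, L = 1 reformulation) For any fixed A and elements B₁,...,B₆ of an associative ring, Σ_{τ∈S₆} sgn(τ) [[A [B_{τ(1)} B_{τ(2)} B_{τ(3)}] B_{τ(4)}] B_{τ(5)} B_{τ(6)}] = Σ_{τ∈S₆} sgn(τ) [[A B_{τ(1)} B_{τ(2)}] [B_{τ(3)} B_{τ(4)} B_{τ(5)}] B_{τ(6)}]. -/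
open Equiv Finset

section

variable {R : Type*} [Ring R] {n : ℕ}

theorem nambu_three (x y z : R) :
    nambu ![x, y, z] = x * y * z - x * z * y - y * x * z + y * z * x + z * x * y - z * y * x := by
  -- enumerate `Perm (Fin 3)` by splitting off the image of `0` twice
  rw [nambu, univ_perm_fin_succ, sum_map, ← univ_product_univ, sum_product]
  simp only [Fin.sum_univ_succ, Fin.sum_univ_zero]
  rw [univ_perm_fin_succ, sum_map, ← univ_product_univ, sum_product]
  simp [Fin.sum_univ_succ, List.ofFn_succ, swap_apply_def, Fin.succ_ne_zero, mul_assoc,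
    sub_eq_add_neg, add_assoc, add_comm, add_left_comm]

def inversionSign (v : Fin n → Fin n) : ℤ := ∏ i, ∏ j ∈ Ioi i, if v i < v j then 1 else -1

theorem inversionSign_eq_sign (σ : Perm (Fin n)) : inversionSign σ = Perm.sign σ := by
  simp [inversionSign, Perm.sign_eq_prod_prod_Ioi, apply_ite]

def alternation (B : Fin n → R) (F : (Fin n → R) → R) : R :=
  ∑ τ : Perm (Fin n), (Perm.sign τ : ℤ) • F (B ∘ τ)

theorem alternation_add (B : Fin n → R) (F G : (Fin n → R) → R) :
    alternation B (fun b => F b + G b) = alternation B F + alternation B G := by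
  simp only [alternation, smul_add, sum_add_distrib]

theorem alternation_zsmul (B : Fin n → R) (c : ℤ) (F : (Fin n → R) → R) :
    alternation B (fun b => c • F b) = c • alternation B F := by
  simp only [alternation, smul_sum, smul_comm c]

theorem alternation_comp_perm (B : Fin n → R) (F : (Fin n → R) → R) (σ : Perm (Fin n)) :
    alternation B (fun b => F (b ∘ σ)) = (Perm.sign σ : ℤ) • alternation B F := by
  rw [alternation, alternation, smul_sum]
  refine Fintype.sum_equiv (Equiv.mulRight σ) _ _ fun τ => ?_
  rw [coe_mulRight, Perm.sign_mul, smul_smul, ← Units.val_mul, mul_left_comm, Int.units_mul_self,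
    mul_one]
  rfl

/-- Words in `A` and `B 0, …, B (n-1)`: the letter `none` stands for `A`, `some i` for `B i`. -/
abbrev Word (n : ℕ) := List (Option (Fin n))

namespace Word

def eval (A : R) (b : Fin n → R) (w : Word n) : R := (w.map (Option.elim · A b)).prod

theorem eval_append (A : R) (b : Fin n → R) (u w : Word n) :
    eval A b (u ++ w) = eval A b u * eval A b w := by
  simp [eval]

theorem eval_map_map (A : R) (b : Fin n → R) (σ : Fin n → Fin n) (w : Word n) :
    eval A b (w.map (Option.map σ)) = eval A (b ∘ σ) w := by
  simp only [eval, List.map_map]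
  congr 2
  funext x
  cases x <;> rfl

def canonical (n k : ℕ) : Word n := ((List.finRange n).map some).insertIdx k none

def indexOfA (w : Word n) : ℕ := w.idxOf none

def lettersB (w : Word n) (i : Fin n) : Fin n := w.reduceOption[i]?.getD i

def IsRelabeledCanonical (w : Word n) : Prop :=
  w = (canonical n w.indexOfA).map (Option.map w.lettersB) ∧ Function.Injective w.lettersB ∧
    w.indexOfA ≤ n

instance (w : Word n) : Decidable w.IsRelabeledCanonical :=
  inferInstanceAs (Decidable (_ ∧ _ ∧ _))

theorem alternation_eval_of_isRelabeledCanonical (A : R) (B : Fin n → R) {w : Word n}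
    (hw : w.IsRelabeledCanonical) :
    alternation B (fun b => eval A b w) =
      inversionSign w.lettersB • alternation B (fun b => eval A b (canonical n w.indexOfA)) := by
  obtain ⟨hmap, hinj, -⟩ := hw
  set σ : Perm (Fin n) := Equiv.ofBijective _ (Finite.injective_iff_bijective.mp hinj)
  have hσ : w.lettersB = σ := rfl
  have hrelabel (b : Fin n → R) : eval A b w = eval A (b ∘ σ) (canonical n w.indexOfA) :=
    (congrArg (eval A b) hmap).trans (eval_map_map A b _ _)
  simp only [hrelabel]
  rw [alternation_comp_perm B (fun b => eval A b (canonical n w.indexOfA)), hσ,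
    inversionSign_eq_sign]

end Word

abbrev WordSum (n : ℕ) := List (ℤ × Word n)

namespace WordSum

def eval (A : R) (b : Fin n → R) (p : WordSum n) : R :=
  (p.map fun t => t.1 • Word.eval A b t.2).sum

def mul (p q : WordSum n) : WordSum n := p.flatMap fun s => q.map fun t => (s.1 * t.1, s.2 ++ t.2)

def neg (p : WordSum n) : WordSum n := p.map fun t => (-t.1, t.2)

def bracket (x y z : WordSum n) : WordSum n :=
  mul (mul x y) z ++ neg (mul (mul x z) y) ++ neg (mul (mul y x) z) ++ mul (mul y z) x ++
    mul (mul z x) y ++ neg (mul (mul z y) x)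

def letterA : WordSum n := [(1, [none])]

def letterB (i : Fin n) : WordSum n := [(1, [some i])]

def coeff (p : WordSum n) (k : ℕ) : ℤ :=
  (p.map fun t => if t.2.indexOfA = k then t.1 * inversionSign t.2.lettersB else 0).sum

theorem coeff_cons (t : ℤ × Word n) (p : WordSum n) (k : ℕ) :
    coeff (t :: p) k =
      (if t.2.indexOfA = k then t.1 * inversionSign t.2.lettersB else 0) + coeff p k :=
  rfl

section Eval

variable (A : R) (b : Fin n → R)

@[simp] theorem eval_nil : eval A b ([] : WordSum n) = 0 := rfl

@[simp] theorem eval_cons (t : ℤ × Word n) (p : WordSum n) :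
    eval A b (t :: p) = t.1 • Word.eval A b t.2 + eval A b p := rfl

theorem eval_append (p q : WordSum n) : eval A b (p ++ q) = eval A b p + eval A b q := by
  simp [eval]

theorem eval_neg (p : WordSum n) : eval A b (neg p) = -eval A b p := by
  induction p with
  | nil => simp [neg]
  | cons s p ih => simp_all [neg, add_comm]

theorem eval_map_mulLeft (c : ℤ) (w : Word n) (q : WordSum n) :
    eval A b (q.map fun t => (c * t.1, w ++ t.2)) = c • (Word.eval A b w * eval A b q) := by
  induction q with
  | nil => simp
  | cons t q ih =>
    simp only [List.map_cons, eval_cons, ih, Word.eval_append, mul_add, smul_add, mul_smul,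
      mul_smul_comm]

theorem eval_mul (p q : WordSum n) : eval A b (mul p q) = eval A b p * eval A b q := by
  induction p with
  | nil => simp [mul]
  | cons s p ih =>
    rw [mul, List.flatMap_cons, eval_append, eval_map_mulLeft, ← mul, ih, eval_cons, add_mul,
      smul_mul_assoc]

theorem eval_bracket (x y z : WordSum n) :
    eval A b (bracket x y z) = nambu ![eval A b x, eval A b y, eval A b z] := by
  simp only [bracket, eval_append, eval_neg, eval_mul, nambu_three]
  abel

@[simp] theorem eval_letterA : eval A b (letterA : WordSum n) = A := by
  simp [letterA, Word.eval]

@[simp] theorem eval_letterB (i : Fin n) : eval A b (letterB i) = b i := by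
  simp [letterB, Word.eval]

end Eval

theorem alternation_eval_eq_sum_coeff (A : R) (B : Fin n → R) {p : WordSum n}
    (hp : ∀ t ∈ p, t.2.IsRelabeledCanonical) :
    alternation B (fun b => eval A b p) =
      ∑ k ∈ range (n + 1),
        coeff p k • alternation B (fun b => Word.eval A b (Word.canonical n k)) := by
  induction p with
  | nil => simp [alternation, coeff]
  | cons t p ih =>
    have ht := hp t List.mem_cons_self
    have hk : t.2.indexOfA ∈ range (n + 1) := mem_range.mpr (Nat.lt_succ_of_le ht.2.2)
    simp only [eval_cons, alternation_add, alternation_zsmul,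
      Word.alternation_eval_of_isRelabeledCanonical A B ht,
      ih fun s hs => hp s (List.mem_cons_of_mem t hs)]
    simp only [coeff_cons, add_smul, sum_add_distrib, ite_smul, zero_smul, sum_ite_eq, if_pos hk,
      mul_smul]

theorem alternation_eval_eq_of_coeff_eq (A : R) (B : Fin n → R) {p q : WordSum n}
    (hp : ∀ t ∈ p, t.2.IsRelabeledCanonical) (hq : ∀ t ∈ q, t.2.IsRelabeledCanonical)
    (hpq : ∀ k ≤ n, coeff p k = coeff q k) :
    alternation B (fun b => eval A b p) = alternation B (fun b => eval A b q) := by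
  rw [alternation_eval_eq_sum_coeff A B hp, alternation_eval_eq_sum_coeff A B hq]
  refine sum_congr rfl fun k hk => ?_
  rw [hpq k (Nat.lt_succ_iff.mp (mem_range.mp hk))]

end WordSum

end

def bremnerLHS : WordSum 6 :=
  .bracket (.bracket .letterA (.bracket (.letterB 0) (.letterB 1) (.letterB 2)) (.letterB 3))
    (.letterB 4) (.letterB 5)

def bremnerRHS : WordSum 6 :=
  .bracket (.bracket .letterA (.letterB 0) (.letterB 1))
    (.bracket (.letterB 2) (.letterB 3) (.letterB 4)) (.letterB 5)

/-- Bremner's identity: with total antisymmetrization over the six lower-case entries,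
`[[A[bcd]e]fg] = [[Abc][def]g]`. -/
theorem main_theorem_L_one {R : Type*} [Ring R] (A : R) (B : Fin 6 → R) :
    ∑ τ : Equiv.Perm (Fin 6), (Equiv.Perm.sign τ : ℤ) •
        nambu ![nambu ![A, nambu ![B (τ 0), B (τ 1), B (τ 2)], B (τ 3)], B (τ 4), B (τ 5)] =
      ∑ τ : Equiv.Perm (Fin 6), (Equiv.Perm.sign τ : ℤ) •
        nambu ![nambu ![A, B (τ 0), B (τ 1)], nambu ![B (τ 2), B (τ 3), B (τ 4)], B (τ 5)] := by
  have hLHS : ∀ t ∈ bremnerLHS, t.2.IsRelabeledCanonical := by decide +kernel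
  have hRHS : ∀ t ∈ bremnerRHS, t.2.IsRelabeledCanonical := by decide +kernel
  have hcoeff : ∀ k ≤ 6, bremnerLHS.coeff k = bremnerRHS.coeff k := by decide +kernel
  have h := WordSum.alternation_eval_eq_of_coeff_eq A B hLHS hRHS hcoeff
  simpa [alternation, bremnerLHS, bremnerRHS, WordSum.eval_bracket] using h
end
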